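/- In the proof of the only-if direction of the intersectability lemma: suppose P ≠ Q are relational paths with common perspective and common terminal class, |Q| ≤ |P|, m = LLRSP(P,Q), n = LLRSP(P̃,Q̃), and |P| = |Q|. If m + n > |Q| and the item sequences witnessing both paths from some base b to some common terminal item c agree on the first m and last n positions, then P = Q, a contradiction; hence m + n > |Q| forces |Q| < |P| in any purported intersection witness. -/
import Mathlib


/-- Kinds of item classes in a relational schema. -/
inductive ItemKind | entity | relationship
deriving DecidableEq

/-- Cardinalities. -/
inductive Card | one | many
deriving DecidableEq

/-- A relational schema: item classes with kinds, participation of entity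
classes in relationship classes, and a cardinality function `card R E`. -/
structure Schema where
  Class : Type
  kind : Class → ItemKind
  participates : Class → Class → Prop   -- `participates E R`
  card : Class → Class → Card           -- `card R E`

namespace Schema

/-- Condition (1) of relational paths: alternation between entity and
relationship classes, with participation at each consecutive pair. -/
def Alternates (S : Schema) (P : List S.Class) : Prop :=
  ∀ i a b, P[i]? = some a → P[i+1]? = some b →
    ((S.kind a = .entity ∧ S.kind b = .relationship ∧ S.participates a b) ∨
     (S.kind a = .relationship ∧ S.kind b = .entity ∧ S.participates b a))

/-- Condition (2): in every subsequence `[E, R, E']`, `E ≠ E'`. -/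
def NoERE (S : Schema) (P : List S.Class) : Prop :=
  ∀ i a b c, P[i]? = some a → P[i+1]? = some b → P[i+2]? = some c →
    S.kind a = .entity → a ≠ c

/-- Condition (3): in every subsequence `[R, E, R']` with `R = R'`,
`card (R, E) = many`. -/
def CardMany (S : Schema) (P : List S.Class) : Prop :=
  ∀ i a b c, P[i]? = some a → P[i+1]? = some b → P[i+2]? = some c →
    S.kind a = .relationship → a = c → S.card a b = .many

/-- A valid relational path. -/
def ValidPath (S : Schema) (P : List S.Class) : Prop :=
  P ≠ [] ∧ S.Alternates P ∧ S.NoERE P ∧ S.CardMany P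

end Schema

/-- A relational skeleton instantiating a schema: items with classes and a
symmetric adjacency relation, respecting participation and cardinality
constraints (`card = one` forces at most one adjacent relationship instance;
relationship instances have exactly one adjacent entity instance per
participating entity class). -/
structure Skeleton (S : Schema) where
  Item : Type
  classOf : Item → S.Class
  adj : Item → Item → Prop
  adj_symm : ∀ {i j}, adj i j → adj j i
  adj_alt : ∀ {i j}, adj i j →
    (S.kind (classOf i) = .entity ∧ S.kind (classOf j) = .relationship ∧
      S.participates (classOf i) (classOf j)) ∨
    (S.kind (classOf i) = .relationship ∧ S.kind (classOf j) = .entity ∧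
      S.participates (classOf j) (classOf i))
  card_one : ∀ {e r r'}, S.kind (classOf e) = .entity →
    S.card (classOf r) (classOf e) = .one → classOf r = classOf r' →
    adj e r → adj e r' → r = r'
  rel_unique : ∀ {r i j}, S.kind (classOf r) = .relationship →
    adj r i → adj r j → classOf i = classOf j → i = j
  rel_total : ∀ {r E}, S.kind (classOf r) = .relationship →
    S.participates E (classOf r) → ∃ e, classOf e = E ∧ adj r e

namespace Skeleton

variable {S : Schema} (σ : Skeleton S)

/-- Auxiliary recursion for terminal sets under bridge burning semantics:
`(tsetAux P b ℓ).1` is the terminal set `P^{1:ℓ+1}|_b` (0-indexed `ℓ`) and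
`(tsetAux P b ℓ).2` is the set of all items visited up to step `ℓ`. -/
def tsetAux (P : List S.Class) (b : σ.Item) : ℕ → Set σ.Item × Set σ.Item
  | 0 => ({b}, {b})
  | ℓ+1 =>
      let prev := tsetAux P b ℓ
      let cur : Set σ.Item :=
        {i | P[ℓ+1]? = some (σ.classOf i) ∧ (∃ j ∈ prev.1, σ.adj i j) ∧
             i ∉ prev.2}
      (cur, prev.2 ∪ cur)

/-- The terminal set `P^{1:ℓ+1}|_b` (so `ℓ` is 0-indexed: `tset P b 0 = {b}`). -/
def tset (P : List S.Class) (b : σ.Item) (ℓ : ℕ) : Set σ.Item :=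
  (σ.tsetAux P b ℓ).1

/-- The (full) terminal set `P|_b`. -/
def tfull (P : List S.Class) (b : σ.Item) : Set σ.Item :=
  σ.tset P b (P.length - 1)

end Skeleton

/-- `LLRSP(P,Q)`: the length of the longest required shared path: the largest
`ℓ ≥ 1` such that `P^{1:ℓ} = Q^{1:ℓ}` and in every skeleton, from every base,
the terminal set of the length-`ℓ` prefix is a singleton. -/
noncomputable def llrsp (S : Schema) (P Q : List S.Class) : ℕ :=
  sSup {ℓ | 1 ≤ ℓ ∧ ℓ ≤ P.length ∧ P.take ℓ = Q.take ℓ ∧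
    ∀ (σ : Skeleton S) (b : σ.Item), P[0]? = some (σ.classOf b) →
      ∃ x, σ.tset P b (ℓ-1) = {x}}

/-- An item sequence `p` traverses the skeleton `σ` along the relational path
`P` under bridge burning semantics: items have the right classes, consecutive
items are adjacent, and no item is revisited. -/
def Traverses {S : Schema} (σ : Skeleton S) (P : List S.Class)
    (p : List σ.Item) : Prop :=
  p.length = P.length ∧ p.Nodup ∧
  (∀ i : ℕ, (p[i]?).map σ.classOf = P[i]?) ∧
  (∀ i a b, p[i]? = some a → p[i+1]? = some b → σ.adj a b)

/-- with `m = LLRSP(P,Q)`, `n = LLRSP(P̃,Q̃)`, if `P ≠ Q` have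
common perspective and terminal class, `|P| = |Q|`, `m + n > |Q|`, and there
are item sequences witnessing both paths from a common base `b` to a common
terminal item `c` that agree on the first `m` and last `n` positions, then we
obtain a contradiction (so such an intersection witness forces `|Q| < |P|`). -/
theorem no_equal_length_witness (S : Schema) (P Q : List S.Class)
    (hP : S.ValidPath P) (hQ : S.ValidPath Q) (hne : P ≠ Q)
    (hhead : P[0]? = Q[0]?) (hlast : P.getLast? = Q.getLast?)
    (hlen : P.length = Q.length)
    (h : Q.length < llrsp S P Q + llrsp S P.reverse Q.reverse)
    (σ : Skeleton S) (b c : σ.Item) (p q : List σ.Item)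
    (hp : Traverses σ P p) (hq : Traverses σ Q q)
    (hpb : p[0]? = some b) (hqb : q[0]? = some b)
    (hpc : p.getLast? = some c) (hqc : q.getLast? = some c)
    (hfirst : p.take (llrsp S P Q) = q.take (llrsp S P Q))
    (hlastn : p.drop (p.length - llrsp S P.reverse Q.reverse) =
              q.drop (q.length - llrsp S P.reverse Q.reverse)) :
    False := by
  obtain ⟨hpl, _, hpc1, _⟩ := hp
  obtain ⟨hql, _, hqc1, _⟩ := hq
  set m := llrsp S P Q with hm
  set n := llrsp S P.reverse Q.reverse with hn
  have hlenpq : p.length = q.length := by rw [hpl, hql, hlen]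
  have hsum : q.length < m + n := by rw [hql]; exact h
  have hpq : p = q := by
    apply List.ext_getElem?
    intro i
    by_cases hi : i < m
    · have := congrArg (fun l => l[i]?) hfirst
      simpa [List.getElem?_take_of_lt hi] using this
    · push_neg at hi
      have hge : q.length - n ≤ i := by omega
      have h1 : p[i]? = (p.drop (p.length - n))[i - (q.length - n)]? := by
        rw [List.getElem?_drop]
        congr 1
        omega
      have h2 : q[i]? = (q.drop (q.length - n))[i - (q.length - n)]? := by
        rw [List.getElem?_drop]
        congr 1
        omega
      rw [h1, h2, hlastn]
  apply hne
  apply List.ext_getElem?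
  intro i
  rw [← hpc1 i, ← hqc1 i, hpq]
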